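/- Let R be a stable conservative Q-matrix on ℕ that is regular (its Feller minimal transition function R(t) satisfies Σ_j R_ij(t) = 1 for all i, t), and let A be a bounded stable conservative Q-matrix with γ = sup_i a_i < ∞. Then Q = R + A is regular, i.e., the Feller minimal transition function Q(t) of Q satisfies Σ_j Q_ij(t) = 1 for all i and t ≥ 0. -/

import Mathlib

/-!
Work with Laplace transforms at `r = γ + 1` of the backward iterates. The deficiency
`1 - ∑ⱼ Qᵢⱼ(t)` of the minimal solution is invariant under the backward integral operator of `Q`,
so its Laplace transform `ζ` is a bounded fixed point of the jump kernel `Qₖₗ / (r - Qₖₖ)`.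
Splitting `Q = R + A` and using `aₖ ≤ γ` gives `ζ ≤ P ζ + γ (sup ζ) b`, where `P` is the jump
kernel of `R` and `bₖ = 1 / (r - Rₖₖ)`. Regularity of `R` says exactly that `∑ₙ Pⁿ b = 1 / r`, so
the mass `Pᴺ 1 = 1 - r ∑_{n<N} Pⁿ b` escapes, whence `r ζ ≤ γ sup ζ` and `ζ = 0` as `γ < r`.
The deficiency then vanishes a.e., hence everywhere, being invariant under the backward operator.
-/

open Real Set Filter Topology MeasureTheory ENNReal

structure IsConservativeQMatrix (B : ℕ → ℕ → ℝ) : Prop where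
  nonneg_of_ne : ∀ i j, i ≠ j → 0 ≤ B i j
  summable : ∀ i, Summable (B i)
  tsum_eq_zero : ∀ i, ∑' j, B i j = 0

namespace IsConservativeQMatrix

variable {B C : ℕ → ℕ → ℝ}

theorem add (hB : IsConservativeQMatrix B) (hC : IsConservativeQMatrix C) :
    IsConservativeQMatrix fun i j => B i j + C i j where
  nonneg_of_ne i j h := add_nonneg (hB.nonneg_of_ne i j h) (hC.nonneg_of_ne i j h)
  summable i := (hB.summable i).add (hC.summable i)
  tsum_eq_zero i := by
    rw [(hB.summable i).tsum_add (hC.summable i), hB.tsum_eq_zero, hC.tsum_eq_zero, add_zero]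

theorem tsum_offDiag (hB : IsConservativeQMatrix B) (i : ℕ) :
    ∑' j, (if j = i then 0 else B i j) = -B i i := by
  linarith [(hB.summable i).tsum_eq_add_tsum_ite i, hB.tsum_eq_zero i]

theorem diag_nonpos (hB : IsConservativeQMatrix B) (i : ℕ) : B i i ≤ 0 := by
  have : 0 ≤ ∑' j, (if j = i then 0 else B i j) :=
    tsum_nonneg fun j => by
      split_ifs with h
      · exact le_rfl
      · exact hB.nonneg_of_ne i j (Ne.symm h)
  linarith [hB.tsum_offDiag i]

theorem tsum_ofReal_offDiag (hB : IsConservativeQMatrix B) (i : ℕ) :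
    ∑' j, (if j = i then 0 else ENNReal.ofReal (B i j)) = ENNReal.ofReal (-B i i) := by
  have hsum : Summable fun j => if j = i then 0 else B i j := by
    refine ((hB.summable i).indicator {i}ᶜ).congr fun j => ?_
    by_cases h : j = i <;> simp [h]
  rw [← hB.tsum_offDiag i, ENNReal.ofReal_tsum_of_nonneg _ hsum]
  · exact tsum_congr fun j => by split_ifs <;> simp
  · intro j
    split_ifs with h
    · exact le_rfl
    · exact hB.nonneg_of_ne i j (Ne.symm h)

end IsConservativeQMatrix

theorem lintegral_Ioi_exp_mul {a : ℝ} (ha : a < 0) (c : ℝ) :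
    ∫⁻ x in Ioi c, ENNReal.ofReal (exp (a * x)) = ENNReal.ofReal (-exp (a * c) / a) := by
  rw [← ofReal_integral_eq_lintegral_ofReal (integrableOn_exp_mul_Ioi ha c)
    (ae_of_all _ fun x => (exp_pos _).le), integral_exp_mul_Ioi ha c]

theorem integral_Ioc_neg_mul_exp_mul_sub (b : ℝ) {t : ℝ} (ht : 0 ≤ t) :
    ∫ s in Ioc 0 t, -b * exp (b * (t - s)) = 1 - exp (b * t) := by
  have hderiv : ∀ s ∈ uIcc 0 t,
      HasDerivAt (fun s => exp (b * (t - s))) (-b * exp (b * (t - s))) s := fun s _ => by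
    convert (((hasDerivAt_id' s).const_sub t).const_mul b).exp using 1
    ring
  rw [← intervalIntegral.integral_of_le ht,
    intervalIntegral.integral_eq_sub_of_hasDerivAt hderiv
    ((by fun_prop : Continuous _).intervalIntegrable _ _)]
  simp

theorem measurable_setLIntegral_Ioc {g : ℝ → ℝ → ℝ≥0∞} (hg : Measurable (Function.uncurry g))
    (a : ℝ) : Measurable fun t => ∫⁻ s in Ioc a t, g t s := by
  have hS : MeasurableSet {p : ℝ × ℝ | p.2 ∈ Ioc a p.1} :=
    (measurableSet_lt measurable_const measurable_snd).inter
      (measurableSet_le measurable_snd measurable_fst)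
  convert (hg.indicator hS).lintegral_prod_right' (ν := volume) using 2 with t
  rw [← lintegral_indicator measurableSet_Ioc]
  rfl

theorem lintegral_Ioi_lintegral_Ioc_swap {F : ℝ → ℝ → ℝ≥0∞}
    (hF : Measurable (Function.uncurry F)) :
    ∫⁻ t in Ioi 0, ∫⁻ s in Ioc 0 t, F t s = ∫⁻ s in Ioi 0, ∫⁻ t in Ici s, F t s := by
  have hH : Measurable (Function.uncurry fun t s => (Iic t).indicator (F t) s) :=
    hF.indicator (measurableSet_le measurable_snd measurable_fst)
  calc ∫⁻ t in Ioi 0, ∫⁻ s in Ioc 0 t, F t s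
      = ∫⁻ t in Ioi 0, ∫⁻ s in Ioi 0, (Iic t).indicator (F t) s := by
        refine lintegral_congr fun t => ?_
        rw [lintegral_indicator measurableSet_Iic, Measure.restrict_restrict measurableSet_Iic,
          Iic_inter_Ioi]
    _ = ∫⁻ s in Ioi 0, ∫⁻ t in Ioi 0, (Ici s).indicator (fun t => F t s) t :=
        lintegral_lintegral_swap hH.aemeasurable
    _ = _ := by
        refine setLIntegral_congr_fun measurableSet_Ioi fun s hs => ?_
        rw [lintegral_indicator measurableSet_Ici, Measure.restrict_restrict measurableSet_Ici,
          inter_eq_left.2 (Ici_subset_Ioi.2 hs)]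

theorem lintegral_Ici_exp_mul_exp {b r : ℝ} (hbr : b < r) (s : ℝ) :
    ∫⁻ t in Ici s, ENNReal.ofReal (exp (-r * t)) * ENNReal.ofReal (exp (b * (t - s))) =
      ENNReal.ofReal (exp (-r * s)) / ENNReal.ofReal (r - b) := by
  have h : ∀ t, ENNReal.ofReal (exp (-r * t)) * ENNReal.ofReal (exp (b * (t - s))) =
      ENNReal.ofReal (exp (-b * s)) * ENNReal.ofReal (exp ((b - r) * t)) := fun t => by
    rw [← ENNReal.ofReal_mul (exp_pos _).le, ← ENNReal.ofReal_mul (exp_pos _).le, ← exp_add,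
      ← exp_add]
    ring_nf
  simp_rw [h]
  rw [Measure.restrict_congr_set Ioi_ae_eq_Ici.symm, lintegral_const_mul' _ _ ofReal_ne_top,
    lintegral_Ioi_exp_mul (by linarith), ← ENNReal.ofReal_mul (exp_pos _).le,
    ← ENNReal.ofReal_div_of_pos (by linarith)]
  congr 1
  have hexp : exp (-r * s) = exp (-b * s) * exp ((b - r) * s) := by rw [← exp_add]; ring_nf
  rw [hexp, ← neg_sub r b]
  field_simp

noncomputable section

def kernelApply (P : ℕ → ℕ → ℝ≥0∞) (y : ℕ → ℝ≥0∞) (k : ℕ) : ℝ≥0∞ := ∑' l, P k l * y l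

section KernelApply

variable {P : ℕ → ℕ → ℝ≥0∞}

theorem kernelApply_mono {y z : ℕ → ℝ≥0∞} (h : ∀ l, y l ≤ z l) (k : ℕ) :
    kernelApply P y k ≤ kernelApply P z k :=
  ENNReal.tsum_le_tsum fun l => by gcongr; exact h l

theorem kernelApply_add_mul (α β : ℝ≥0∞) (y z : ℕ → ℝ≥0∞) (k : ℕ) :
    kernelApply P (fun l => α * y l + β * z l) k =
      α * kernelApply P y k + β * kernelApply P z k := by
  simp_rw [kernelApply, mul_add, ENNReal.tsum_add, mul_left_comm (P k _), ENNReal.tsum_mul_left]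

theorem sum_range_succ_iterate_kernelApply (b : ℕ → ℝ≥0∞) (N k : ℕ) :
    ∑ n ∈ Finset.range (N + 1), (kernelApply P)^[n] b k =
      b k + kernelApply P (fun l => ∑ n ∈ Finset.range N, (kernelApply P)^[n] b l) k := by
  simp only [Finset.sum_range_succ', Function.iterate_succ_apply', kernelApply, Finset.mul_sum,
    Function.iterate_zero_apply]
  rw [Summable.tsum_finsetSum fun _ _ => ENNReal.summable, add_comm]

theorem iterate_kernelApply_one_add {b : ℕ → ℝ≥0∞} {a : ℝ≥0∞}
    (hP : ∀ k, kernelApply P (fun _ => 1) k + a * b k = 1) (N k : ℕ) :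
    (kernelApply P)^[N] (fun _ => 1) k + a * ∑ n ∈ Finset.range N, (kernelApply P)^[n] b k = 1 := by
  induction N generalizing k with
  | zero => simp
  | succ N ih =>
    calc (kernelApply P)^[N + 1] (fun _ => 1) k +
          a * ∑ n ∈ Finset.range (N + 1), (kernelApply P)^[n] b k
        = kernelApply P (fun l => 1 * (kernelApply P)^[N] (fun _ => 1) l +
            a * ∑ n ∈ Finset.range N, (kernelApply P)^[n] b l) k + a * b k := by
          rw [Function.iterate_succ_apply', sum_range_succ_iterate_kernelApply,
            kernelApply_add_mul]
          ring
      _ = 1 := by simp_rw [one_mul, ih, hP]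

theorem le_iterate_kernelApply_add {b x : ℕ → ℝ≥0∞} {c C : ℝ≥0∞} (hxC : ∀ k, x k ≤ C)
    (hx : ∀ k, x k ≤ kernelApply P x k + c * b k) (N k : ℕ) :
    x k ≤ C * (kernelApply P)^[N] (fun _ => 1) k +
      c * ∑ n ∈ Finset.range N, (kernelApply P)^[n] b k := by
  induction N generalizing k with
  | zero => simpa using hxC k
  | succ N ih =>
    calc x k ≤ kernelApply P (fun l => C * (kernelApply P)^[N] (fun _ => 1) l +
          c * ∑ n ∈ Finset.range N, (kernelApply P)^[n] b l) k + c * b k :=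
          (hx k).trans (by gcongr; exact kernelApply_mono ih k)
      _ = _ := by
          rw [Function.iterate_succ_apply', sum_range_succ_iterate_kernelApply,
            kernelApply_add_mul]
          ring

theorem mul_le_of_le_kernelApply_add {b x : ℕ → ℝ≥0∞} {a c C : ℝ≥0∞} (ha : a ≠ ⊤)
    (hP : ∀ k, kernelApply P (fun _ => 1) k + a * b k = 1)
    (hreg : ∀ k, a * ∑' n, (kernelApply P)^[n] b k = 1) (hC : C ≠ ⊤) (hxC : ∀ k, x k ≤ C)
    (hx : ∀ k, x k ≤ kernelApply P x k + c * b k) (k : ℕ) : a * x k ≤ c := by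
  set S : ℕ → ℝ≥0∞ := fun N => a * ∑ n ∈ Finset.range N, (kernelApply P)^[n] b k
  set v : ℕ → ℝ≥0∞ := fun N => (kernelApply P)^[N] (fun _ => 1) k
  have hvS : ∀ N, v N + S N = 1 := fun N => iterate_kernelApply_one_add hP N k
  have hv : Tendsto v atTop (𝓝 0) := by
    have hS : Tendsto S atTop (𝓝 1) :=
      hreg k ▸ ENNReal.Tendsto.const_mul (ENNReal.tendsto_nat_tsum _) (Or.inr ha)
    have hsub := ENNReal.Tendsto.sub tendsto_const_nhds hS (Or.inl one_ne_top)
    rw [tsub_self] at hsub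
    refine hsub.congr fun N => ?_
    exact (ENNReal.eq_sub_of_add_eq (ne_top_of_le_ne_top one_ne_top (hvS N ▸ le_add_self))
      (hvS N)).symm
  have hbound : ∀ N, a * x k ≤ a * C * v N + c := fun N => calc
    a * x k ≤ a * (C * v N + c * ∑ n ∈ Finset.range N, (kernelApply P)^[n] b k) := by
      gcongr; exact le_iterate_kernelApply_add hxC hx N k
    _ = a * C * v N + c * S N := by ring
    _ ≤ a * C * v N + c * 1 := by gcongr; exact hvS N ▸ le_add_self
    _ = a * C * v N + c := by rw [mul_one]
  have hlim : Tendsto (fun N => a * C * v N + c) atTop (𝓝 c) := by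
    simpa using (ENNReal.Tendsto.const_mul hv (Or.inr (ENNReal.mul_ne_top ha hC))).add_const c
  exact ge_of_tendsto' hlim hbound

end KernelApply

def backwardOp (B : ℕ → ℕ → ℝ) (f : ℕ → ℝ → ℝ≥0∞) (i : ℕ) (t : ℝ) : ℝ≥0∞ :=
  ∑' k, if k = i then 0 else
    ∫⁻ s in Ioc 0 t, ENNReal.ofReal (exp (B i i * (t - s)) * B i k) * f k s

section BackwardOp

variable {B : ℕ → ℕ → ℝ}

theorem measurable_backwardOp {f : ℕ → ℝ → ℝ≥0∞} (hf : ∀ k, Measurable (f k)) (i : ℕ) :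
    Measurable (backwardOp B f i) :=
  Measurable.tsum fun k => by
    by_cases hk : k = i
    · simp [hk]
    · simp only [if_neg hk]
      exact measurable_setLIntegral_Ioc (by fun_prop) 0

theorem backwardOp_congr_ae {f g : ℕ → ℝ → ℝ≥0∞}
    (h : ∀ k, f k =ᵐ[volume.restrict (Ioi 0)] g k) (i : ℕ) (t : ℝ) :
    backwardOp B f i t = backwardOp B g i t := by
  refine tsum_congr fun k => ?_
  split_ifs
  · rfl
  · refine lintegral_congr_ae ?_
    filter_upwards [ae_restrict_of_ae_restrict_of_subset Ioc_subset_Ioi_self (h k)] with s hs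
    rw [hs]

theorem backwardOp_mono {f g : ℕ → ℝ → ℝ≥0∞} (h : ∀ k s, f k s ≤ g k s) (i : ℕ) (t : ℝ) :
    backwardOp B f i t ≤ backwardOp B g i t :=
  ENNReal.tsum_le_tsum fun k => by
    split_ifs
    · exact le_rfl
    · exact lintegral_mono fun s => mul_le_mul_right (h k s) _

theorem backwardOp_of_nonpos (f : ℕ → ℝ → ℝ≥0∞) (i : ℕ) {t : ℝ} (ht : t ≤ 0) :
    backwardOp B f i t = 0 := by
  simp [backwardOp, Ioc_eq_empty (not_lt.2 ht)]

theorem backwardOp_add {f g : ℕ → ℝ → ℝ≥0∞} (hf : ∀ k, Measurable (f k)) (i : ℕ) (t : ℝ) :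
    backwardOp B (fun k s => f k s + g k s) i t = backwardOp B f i t + backwardOp B g i t := by
  unfold backwardOp
  rw [← ENNReal.tsum_add]
  refine tsum_congr fun k => ?_
  split_ifs
  · simp
  · simp_rw [mul_add]
    exact lintegral_add_left (by fun_prop) _

theorem backwardOp_sum {ι : Type*} (u : Finset ι) {f : ι → ℕ → ℝ → ℝ≥0∞}
    (hf : ∀ n k, Measurable (f n k)) (i : ℕ) (t : ℝ) :
    backwardOp B (fun k s => ∑ n ∈ u, f n k s) i t = ∑ n ∈ u, backwardOp B (f n) i t := by
  classical
  induction u using Finset.induction_on with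
  | empty => simp [backwardOp]
  | insert n u hn ih =>
    simp only [Finset.sum_insert hn]
    rw [backwardOp_add (hf n), ih]

theorem backwardOp_tsum {f : ℕ → ℕ → ℝ → ℝ≥0∞} (hf : ∀ n k, Measurable (f n k)) (i : ℕ)
    (t : ℝ) : backwardOp B (fun k s => ∑' n, f n k s) i t = ∑' n, backwardOp B (f n) i t := by
  unfold backwardOp
  rw [ENNReal.tsum_comm]
  refine tsum_congr fun k => ?_
  split_ifs
  · simp
  · simp_rw [ENNReal.tsum_mul_left.symm]
    exact lintegral_tsum fun n => by fun_prop

theorem backwardOp_one (hB : IsConservativeQMatrix B) (i : ℕ) {t : ℝ} (ht : 0 ≤ t) :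
    ENNReal.ofReal (exp (B i i * t)) + backwardOp B (fun _ _ => 1) i t = 1 := by
  have hb := hB.diag_nonpos i
  have hK : backwardOp B (fun _ _ => 1) i t = ENNReal.ofReal (1 - exp (B i i * t)) := calc
    backwardOp B (fun _ _ => 1) i t
        = ∑' k, (if k = i then 0 else ENNReal.ofReal (B i k)) *
            ∫⁻ s in Ioc 0 t, ENNReal.ofReal (exp (B i i * (t - s))) := by
          refine tsum_congr fun k => ?_
          split_ifs with hk
          · simp
          · simp_rw [mul_one, mul_comm (exp _),
              ENNReal.ofReal_mul (hB.nonneg_of_ne i k (Ne.symm hk))]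
            exact lintegral_const_mul' _ _ ofReal_ne_top
      _ = ∫⁻ s in Ioc 0 t, ENNReal.ofReal (-B i i * exp (B i i * (t - s))) := by
          rw [ENNReal.tsum_mul_right, hB.tsum_ofReal_offDiag,
            ← lintegral_const_mul' _ _ ofReal_ne_top]
          simp_rw [← ENNReal.ofReal_mul (neg_nonneg.2 hb)]
      _ = _ := by
          rw [← ofReal_integral_eq_lintegral_ofReal, integral_Ioc_neg_mul_exp_mul_sub _ ht]
          · exact (by fun_prop : Continuous _).integrableOn_Ioc
          · exact ae_of_all _ fun s => mul_nonneg (neg_nonneg.2 hb) (exp_pos _).le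
  have he : exp (B i i * t) ≤ 1 := exp_le_one_iff.2 (mul_nonpos_of_nonpos_of_nonneg hb ht)
  rw [hK, ← ENNReal.ofReal_add (exp_pos _).le (sub_nonneg.2 he), add_sub_cancel, ofReal_one]

end BackwardOp

/-- A canonical, measurable choice of the iterates `Rn`, `Qn` of the main theorem, which the
hypotheses pin down only for `0 ≤ t`. -/
def backwardIter (B : ℕ → ℕ → ℝ) : ℕ → ℕ → ℕ → ℝ → ℝ≥0∞
  | 0, i, j, t => if 0 ≤ t ∧ i = j then ENNReal.ofReal (exp (B i i * t)) else 0
  | n + 1, i, j, t => backwardOp B (fun k => backwardIter B n k j) i t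

def backwardRowSum (B : ℕ → ℕ → ℝ) (n i : ℕ) (t : ℝ) : ℝ≥0∞ := ∑' j, backwardIter B n i j t

def minimalRowSum (B : ℕ → ℕ → ℝ) (i : ℕ) (t : ℝ) : ℝ≥0∞ := ∑' n, backwardRowSum B n i t

section BackwardIter

variable {B : ℕ → ℕ → ℝ}

theorem measurable_backwardIter (n i j : ℕ) : Measurable (backwardIter B n i j) := by
  induction n generalizing i with
  | zero =>
    refine Measurable.ite (measurableSet_Ici.inter (MeasurableSet.const _)) ?_ measurable_const
    fun_prop
  | succ n ih => exact measurable_backwardOp (fun k => ih k) i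

theorem backwardIter_eq_of_recursion (P : ℕ → ℕ → ℕ → ℝ → ℝ≥0∞)
    (hP0 : ∀ i j t, 0 ≤ t → P 0 i j t =
      if i = j then ENNReal.ofReal (exp (B i i * t)) else 0)
    (hPsucc : ∀ n i j t, 0 ≤ t → P (n + 1) i j t = backwardOp B (fun k s => P n k j s) i t)
    (n i j : ℕ) {t : ℝ} (ht : 0 ≤ t) : backwardIter B n i j t = P n i j t := by
  induction n generalizing i t with
  | zero => simp [backwardIter, hP0 i j t ht, ht]
  | succ n ih =>
    rw [hPsucc n i j t ht, backwardIter]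
    refine backwardOp_congr_ae (fun k => ?_) i t
    filter_upwards [ae_restrict_mem measurableSet_Ioi] with s hs
    exact ih k (le_of_lt hs)

theorem tsum_tsum_eq_minimalRowSum (P : ℕ → ℕ → ℕ → ℝ → ℝ≥0∞)
    (hP0 : ∀ i j t, 0 ≤ t → P 0 i j t =
      if i = j then ENNReal.ofReal (exp (B i i * t)) else 0)
    (hPsucc : ∀ n i j t, 0 ≤ t → P (n + 1) i j t = backwardOp B (fun k s => P n k j s) i t)
    (i : ℕ) {t : ℝ} (ht : 0 ≤ t) : ∑' j, ∑' n, P n i j t = minimalRowSum B i t := by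
  rw [ENNReal.tsum_comm]
  exact tsum_congr fun n => tsum_congr fun j =>
    (backwardIter_eq_of_recursion P hP0 hPsucc n i j ht).symm

theorem measurable_backwardRowSum (n i : ℕ) : Measurable (backwardRowSum B n i) :=
  Measurable.tsum fun j => measurable_backwardIter n i j

theorem measurable_minimalRowSum (i : ℕ) : Measurable (minimalRowSum B i) :=
  Measurable.tsum fun n => measurable_backwardRowSum n i

theorem backwardRowSum_zero (i : ℕ) (t : ℝ) :
    backwardRowSum B 0 i t = if 0 ≤ t then ENNReal.ofReal (exp (B i i * t)) else 0 := by
  rw [backwardRowSum, tsum_eq_single i fun j hj => by simp [backwardIter, Ne.symm hj]]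
  simp [backwardIter]

theorem backwardRowSum_succ (n i : ℕ) (t : ℝ) :
    backwardRowSum B (n + 1) i t = backwardOp B (backwardRowSum B n) i t :=
  (backwardOp_tsum (fun j k => measurable_backwardIter n k j) i t).symm

theorem minimalRowSum_eq (i : ℕ) {t : ℝ} (ht : 0 ≤ t) :
    minimalRowSum B i t =
      ENNReal.ofReal (exp (B i i * t)) + backwardOp B (minimalRowSum B) i t := by
  rw [minimalRowSum, tsum_eq_zero_add' ENNReal.summable, backwardRowSum_zero, if_pos ht]
  simp_rw [backwardRowSum_succ]
  exact congrArg _ (backwardOp_tsum (fun n k => measurable_backwardRowSum n k) i t).symm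

theorem minimalRowSum_le_one (hB : IsConservativeQMatrix B) (i : ℕ) (t : ℝ) :
    minimalRowSum B i t ≤ 1 := by
  refine ENNReal.tsum_le_of_sum_range_le fun N => ?_
  induction N generalizing i t with
  | zero => simp
  | succ N ih =>
    rw [Finset.sum_range_succ', backwardRowSum_zero]
    simp_rw [backwardRowSum_succ]
    rw [← backwardOp_sum _ (fun n k => measurable_backwardRowSum n k)]
    rcases lt_or_ge t 0 with ht | ht
    · simp [not_le.2 ht, backwardOp_of_nonpos _ _ ht.le]
    · rw [if_pos ht, add_comm, ← backwardOp_one hB i ht]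
      gcongr
      exact backwardOp_mono (fun k s => ih k s) i t

theorem one_sub_minimalRowSum_eq (hB : IsConservativeQMatrix B) (i : ℕ) {t : ℝ} (ht : 0 ≤ t) :
    1 - minimalRowSum B i t = backwardOp B (fun k s => 1 - minimalRowSum B k s) i t := by
  have hsplit : backwardOp B (fun _ _ => 1) i t =
      backwardOp B (fun k s => 1 - minimalRowSum B k s) i t +
        backwardOp B (minimalRowSum B) i t := by
    rw [← backwardOp_add fun k => (measurable_minimalRowSum k).const_sub 1]
    simp_rw [tsub_add_cancel_of_le (minimalRowSum_le_one hB _ _)]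
  refine ENNReal.sub_eq_of_eq_add (ne_top_of_le_ne_top one_ne_top (minimalRowSum_le_one hB i t)) ?_
  calc (1 : ℝ≥0∞) = ENNReal.ofReal (exp (B i i * t)) + backwardOp B (fun _ _ => 1) i t :=
        (backwardOp_one hB i ht).symm
    _ = _ := by rw [hsplit, minimalRowSum_eq i ht]; ring

end BackwardIter

def laplace (r : ℝ) (f : ℝ → ℝ≥0∞) : ℝ≥0∞ :=
  ∫⁻ t in Ioi 0, ENNReal.ofReal (exp (-r * t)) * f t

section Laplace

variable {r : ℝ}

theorem laplace_congr {f g : ℝ → ℝ≥0∞} (h : ∀ t, 0 < t → f t = g t) :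
    laplace r f = laplace r g :=
  setLIntegral_congr_fun measurableSet_Ioi fun t ht => by rw [h t ht]

theorem laplace_mono {f g : ℝ → ℝ≥0∞} (h : ∀ t, f t ≤ g t) : laplace r f ≤ laplace r g :=
  lintegral_mono fun t => by gcongr; exact h t

theorem laplace_exp {c : ℝ} (hc : c < r) :
    laplace r (fun t => ENNReal.ofReal (exp (c * t))) = (ENNReal.ofReal (r - c))⁻¹ := by
  have h : ∀ t, ENNReal.ofReal (exp (-r * t)) * ENNReal.ofReal (exp (c * t)) =
      ENNReal.ofReal (exp ((c - r) * t)) := fun t => by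
    rw [← ENNReal.ofReal_mul (exp_pos _).le, ← exp_add]
    ring_nf
  simp_rw [laplace, h]
  rw [lintegral_Ioi_exp_mul (by linarith) 0, ← ENNReal.ofReal_inv_of_pos (by linarith)]
  rw [mul_zero, exp_zero, neg_div, ← div_neg, neg_sub, one_div]

theorem laplace_one (hr : 0 < r) : laplace r (fun _ => 1) = (ENNReal.ofReal r)⁻¹ := by
  simpa using laplace_exp (c := 0) hr

theorem laplace_tsum {f : ℕ → ℝ → ℝ≥0∞} (hf : ∀ n, Measurable (f n)) :
    laplace r (fun t => ∑' n, f n t) = ∑' n, laplace r (f n) := by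
  simp_rw [laplace, ← ENNReal.tsum_mul_left]
  exact lintegral_tsum fun n => by fun_prop

theorem ae_eq_zero_of_laplace_eq_zero {f : ℝ → ℝ≥0∞} (hf : Measurable f) (h : laplace r f = 0) :
    f =ᵐ[volume.restrict (Ioi 0)] 0 := by
  filter_upwards [(lintegral_eq_zero_iff (by fun_prop)).1 h] with t ht
  simp only [Pi.zero_apply, mul_eq_zero, ENNReal.ofReal_eq_zero] at ht
  exact ht.resolve_left (exp_pos _).not_ge

end Laplace

theorem laplace_setLIntegral_Ioc_exp_mul {b r : ℝ} (hbr : b < r) (c : ℝ) {g : ℝ → ℝ≥0∞}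
    (hg : Measurable g) :
    laplace r (fun t => ∫⁻ s in Ioc 0 t, ENNReal.ofReal (exp (b * (t - s)) * c) * g s) =
      ENNReal.ofReal c / ENNReal.ofReal (r - b) * laplace r g := by
  have h : ∀ t s, ENNReal.ofReal (exp (-r * t)) * (ENNReal.ofReal (exp (b * (t - s)) * c) * g s) =
      ENNReal.ofReal c * g s *
        (ENNReal.ofReal (exp (-r * t)) * ENNReal.ofReal (exp (b * (t - s)))) :=
    fun t s => by rw [ENNReal.ofReal_mul (exp_pos _).le]; ring
  calc laplace r (fun t => ∫⁻ s in Ioc 0 t, ENNReal.ofReal (exp (b * (t - s)) * c) * g s)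
      = ∫⁻ t in Ioi 0, ∫⁻ s in Ioc 0 t, ENNReal.ofReal c * g s *
          (ENNReal.ofReal (exp (-r * t)) * ENNReal.ofReal (exp (b * (t - s)))) := by
        simp_rw [laplace, ← lintegral_const_mul' _ _ ofReal_ne_top, h]
    _ = ∫⁻ s in Ioi 0, ∫⁻ t in Ici s, ENNReal.ofReal c * g s *
          (ENNReal.ofReal (exp (-r * t)) * ENNReal.ofReal (exp (b * (t - s)))) :=
        lintegral_Ioi_lintegral_Ioc_swap (by fun_prop)
    _ = ∫⁻ s in Ioi 0, ENNReal.ofReal c / ENNReal.ofReal (r - b) *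
          (ENNReal.ofReal (exp (-r * s)) * g s) := by
        refine setLIntegral_congr_fun measurableSet_Ioi fun s _ => ?_
        rw [lintegral_const_mul _ (by fun_prop), lintegral_Ici_exp_mul_exp hbr]
        simp_rw [div_eq_mul_inv]
        ring
    _ = _ := lintegral_const_mul _ (by fun_prop)

def jumpKernel (B : ℕ → ℕ → ℝ) (r : ℝ) (i k : ℕ) : ℝ≥0∞ :=
  if k = i then 0 else ENNReal.ofReal (B i k) / ENNReal.ofReal (r - B i i)

theorem laplace_backwardOp {B : ℕ → ℕ → ℝ} {r : ℝ} (i : ℕ) (hr : B i i < r)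
    {f : ℕ → ℝ → ℝ≥0∞} (hf : ∀ k, Measurable (f k)) :
    laplace r (backwardOp B f i) = kernelApply (jumpKernel B r) (fun k => laplace r (f k)) i := by
  unfold backwardOp kernelApply
  rw [laplace_tsum fun k => by
    split_ifs
    exacts [measurable_const, measurable_setLIntegral_Ioc (by fun_prop) 0]]
  refine tsum_congr fun k => ?_
  split_ifs with hk
  · simp [jumpKernel, hk, laplace]
  · rw [jumpKernel, if_neg hk]
    exact laplace_setLIntegral_Ioc_exp_mul hr _ (hf k)

section JumpKernel

variable {B R A : ℕ → ℕ → ℝ} {r : ℝ}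

theorem IsConservativeQMatrix.kernelApply_jumpKernel_one_add (hB : IsConservativeQMatrix B)
    (hr : 0 < r) (i : ℕ) :
    kernelApply (jumpKernel B r) (fun _ => 1) i +
      ENNReal.ofReal r * (ENNReal.ofReal (r - B i i))⁻¹ = 1 := by
  have hb := hB.diag_nonpos i
  have hJ : ∀ k, jumpKernel B r i k =
      (if k = i then 0 else ENNReal.ofReal (B i k)) * (ENNReal.ofReal (r - B i i))⁻¹ := fun k => by
    rw [jumpKernel]
    split_ifs <;> simp [div_eq_mul_inv]
  simp_rw [kernelApply, mul_one, hJ]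
  rw [ENNReal.tsum_mul_right, hB.tsum_ofReal_offDiag, ← add_mul,
    ← ENNReal.ofReal_add (by linarith) hr.le, neg_add_eq_sub]
  exact ENNReal.mul_inv_cancel (by simp; linarith) ofReal_ne_top

theorem jumpKernel_add_le (hR : IsConservativeQMatrix R) (hA : IsConservativeQMatrix A)
    (k l : ℕ) : jumpKernel (fun i j => R i j + A i j) r k l ≤
      jumpKernel R r k l + (if l = k then 0 else ENNReal.ofReal (A k l)) /
        ENNReal.ofReal (r - R k k) := by
  unfold jumpKernel
  split_ifs with hl
  · simp
  · rw [ENNReal.ofReal_add (hR.nonneg_of_ne k l (Ne.symm hl)) (hA.nonneg_of_ne k l (Ne.symm hl)),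
      ENNReal.add_div]
    gcongr <;> linarith [hA.diag_nonpos k]

theorem kernelApply_jumpKernel_add_le (hR : IsConservativeQMatrix R)
    (hA : IsConservativeQMatrix A) {x : ℕ → ℝ≥0∞} {M : ℝ≥0∞} (hxM : ∀ l, x l ≤ M) (k : ℕ) :
    kernelApply (jumpKernel (fun i j => R i j + A i j) r) x k ≤
      kernelApply (jumpKernel R r) x k +
        ENNReal.ofReal (-A k k) * M * (ENNReal.ofReal (r - R k k))⁻¹ := by
  calc kernelApply (jumpKernel (fun i j => R i j + A i j) r) x k
      ≤ ∑' l, (jumpKernel R r k l * x l +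
          (if l = k then 0 else ENNReal.ofReal (A k l)) * (ENNReal.ofReal (r - R k k))⁻¹ * M) :=
        ENNReal.tsum_le_tsum fun l => by
          grw [jumpKernel_add_le hR hA k l, add_mul, div_eq_mul_inv]
          gcongr
          exact hxM l
    _ = _ := by
        rw [ENNReal.tsum_add, ENNReal.tsum_mul_right, ENNReal.tsum_mul_right,
          hA.tsum_ofReal_offDiag, mul_right_comm _ M]
        rfl

theorem eq_zero_of_eq_kernelApply_jumpKernel_add (hR : IsConservativeQMatrix R)
    (hA : IsConservativeQMatrix A) {γ : ℝ} (hγ : ∀ k, -A k k ≤ γ) (hγr : γ < r)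
    (hreg : ∀ k, ENNReal.ofReal r *
      ∑' n, (kernelApply (jumpKernel R r))^[n] (fun l => (ENNReal.ofReal (r - R l l))⁻¹) k = 1)
    {x : ℕ → ℝ≥0∞} {C : ℝ≥0∞} (hC : C ≠ ⊤) (hxC : ∀ k, x k ≤ C)
    (hx : ∀ k, x k = kernelApply (jumpKernel (fun i j => R i j + A i j) r) x k) (k : ℕ) :
    x k = 0 := by
  have hr : 0 < r := by linarith [hA.diag_nonpos 0, hγ 0]
  set M := ⨆ k, x k
  have hM : M ≠ ⊤ := ne_top_of_le_ne_top hC (iSup_le hxC)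
  have hsub : ∀ k, x k ≤ kernelApply (jumpKernel R r) x k +
      ENNReal.ofReal γ * M * (ENNReal.ofReal (r - R k k))⁻¹ := fun k => by
    grw [hx k, kernelApply_jumpKernel_add_le hR hA (le_iSup x) k, hγ k]
  have hrM : ENNReal.ofReal r * M ≤ ENNReal.ofReal γ * M := by
    rw [ENNReal.mul_iSup]
    exact iSup_le <| mul_le_of_le_kernelApply_add ofReal_ne_top
      (hR.kernelApply_jumpKernel_one_add hr) hreg hM (le_iSup x) hsub
  have hM0 : M = 0 := by
    by_contra hM0
    have := (ENNReal.mul_le_mul_iff_left hM0 hM).1 hrM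
    exact absurd this (not_le.2 ((ENNReal.ofReal_lt_ofReal_iff hr).2 hγr))
  exact le_antisymm (hM0 ▸ le_iSup x k) bot_le

end JumpKernel

section MinimalRowSum

variable {B : ℕ → ℕ → ℝ} {r : ℝ}

theorem laplace_backwardRowSum (hB : IsConservativeQMatrix B) (hr : 0 < r) (n k : ℕ) :
    laplace r (backwardRowSum B n k) =
      (kernelApply (jumpKernel B r))^[n] (fun l => (ENNReal.ofReal (r - B l l))⁻¹) k := by
  induction n generalizing k with
  | zero =>
    rw [laplace_congr (g := fun t => ENNReal.ofReal (exp (B k k * t)))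
      fun t ht => by rw [backwardRowSum_zero, if_pos ht.le]]
    exact laplace_exp (by linarith [hB.diag_nonpos k])
  | succ n ih =>
    rw [show backwardRowSum B (n + 1) k = backwardOp B (backwardRowSum B n) k from
        funext (backwardRowSum_succ n k),
      laplace_backwardOp k (by linarith [hB.diag_nonpos k]) (measurable_backwardRowSum n),
      Function.iterate_succ_apply']
    simp_rw [ih]

theorem laplace_one_sub_minimalRowSum (hB : IsConservativeQMatrix B) (hr : 0 < r) (k : ℕ) :
    laplace r (fun s => 1 - minimalRowSum B k s) =
      kernelApply (jumpKernel B r) (fun l => laplace r fun s => 1 - minimalRowSum B l s) k := by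
  rw [laplace_congr fun t ht => one_sub_minimalRowSum_eq hB k ht.le,
    laplace_backwardOp k (by linarith [hB.diag_nonpos k])
      fun l => (measurable_minimalRowSum l).const_sub 1]

theorem minimalRowSum_eq_one_of_laplace_eq_zero (hB : IsConservativeQMatrix B)
    (h : ∀ k, laplace r (fun s => 1 - minimalRowSum B k s) = 0) (i : ℕ) {t : ℝ} (ht : 0 ≤ t) :
    minimalRowSum B i t = 1 := by
  have hdef : 1 - minimalRowSum B i t = 0 := by
    rw [one_sub_minimalRowSum_eq hB i ht, backwardOp_congr_ae (g := fun _ _ => 0)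
      (fun k => ae_eq_zero_of_laplace_eq_zero ((measurable_minimalRowSum k).const_sub 1) (h k))]
    simp [backwardOp]
  exact le_antisymm (minimalRowSum_le_one hB i t) (tsub_eq_zero_iff_le.1 hdef)

end MinimalRowSum

theorem minimalRowSum_add_eq_one {R A : ℕ → ℕ → ℝ} (hR : IsConservativeQMatrix R)
    (hA : IsConservativeQMatrix A) {γ : ℝ} (hγ : ∀ k, -A k k ≤ γ)
    (hreg : ∀ i t, 0 ≤ t → minimalRowSum R i t = 1) (i : ℕ) {t : ℝ} (ht : 0 ≤ t) :
    minimalRowSum (fun i j => R i j + A i j) i t = 1 := by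
  have hQ := hR.add hA
  have hr : 0 < γ + 1 := by linarith [hA.diag_nonpos 0, hγ 0]
  have hRlaplace : ∀ k, ENNReal.ofReal (γ + 1) * ∑' n, (kernelApply (jumpKernel R (γ + 1)))^[n]
      (fun l => (ENNReal.ofReal (γ + 1 - R l l))⁻¹) k = 1 := fun k => by
    simp_rw [← laplace_backwardRowSum hR hr]
    rw [← laplace_tsum fun n => measurable_backwardRowSum n k,
      laplace_congr (f := fun t => ∑' n, backwardRowSum R n k t) fun t ht => hreg k t ht.le,
      laplace_one hr]
    exact ENNReal.mul_inv_cancel (ofReal_pos.2 hr).ne' ofReal_ne_top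
  refine minimalRowSum_eq_one_of_laplace_eq_zero hQ (r := γ + 1) (fun k => ?_) i ht
  exact eq_zero_of_eq_kernelApply_jumpKernel_add hR hA hγ (lt_add_one γ) hRlaplace
    (ENNReal.inv_ne_top.2 (ofReal_pos.2 hr).ne')
    (fun k => (laplace_mono fun s => tsub_le_self).trans_eq (laplace_one hr))
    (laplace_one_sub_minimalRowSum hQ hr) k

end

/-- if the stable conservative Q-matrix `R` is regular (its Feller
minimal transition function `Σ_n R^(n)` is honest) and `A` is a bounded stable
conservative Q-matrix, then the perturbation `Q = R + A` is regular. -/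
theorem regular_of_regular_perturbation
    (R A : ℕ → ℕ → ℝ) (γ : ℝ)
    (hRpos : ∀ i j, i ≠ j → 0 ≤ R i j)
    (hRstable : ∀ i, Summable (R i))
    (hRcons : ∀ i, ∑' j, R i j = 0)
    (hApos : ∀ i j, i ≠ j → 0 ≤ A i j)
    (hAstable : ∀ i, Summable (A i))
    (hAcons : ∀ i, ∑' j, A i j = 0)
    (hbdd : BddAbove (Set.range fun i => -A i i))
    (hγ : γ = ⨆ i, -A i i)
    (Rn Qn : ℕ → ℕ → ℕ → ℝ → ℝ≥0∞)
    (hRn0 : ∀ i j t, 0 ≤ t → Rn 0 i j t =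
      if i = j then ENNReal.ofReal (Real.exp (R i i * t)) else 0)
    (hRnrec : ∀ n i j t, 0 ≤ t → Rn (n + 1) i j t =
      ∑' k, if k = i then 0 else
        ∫⁻ s in Set.Ioc (0 : ℝ) t,
          ENNReal.ofReal (Real.exp (R i i * (t - s)) * R i k) * Rn n k j s)
    (hQn0 : ∀ i j t, 0 ≤ t → Qn 0 i j t =
      if i = j then ENNReal.ofReal (Real.exp ((R i i + A i i) * t)) else 0)
    (hQnrec : ∀ n i j t, 0 ≤ t → Qn (n + 1) i j t =
      ∑' k, if k = i then 0 else
        ∫⁻ s in Set.Ioc (0 : ℝ) t,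
          ENNReal.ofReal (Real.exp ((R i i + A i i) * (t - s)) * (R i k + A i k)) * Qn n k j s)
    (hRreg : ∀ i t, 0 ≤ t → (∑' j, ∑' n, Rn n i j t) = 1) :
    ∀ i t, 0 ≤ t → (∑' j, ∑' n, Qn n i j t) = 1 := by
  have hR : IsConservativeQMatrix R := ⟨hRpos, hRstable, hRcons⟩
  have hA : IsConservativeQMatrix A := ⟨hApos, hAstable, hAcons⟩
  have hγA : ∀ i, -A i i ≤ γ := fun i => hγ ▸ le_ciSup hbdd i
  intro i t ht
  rw [tsum_tsum_eq_minimalRowSum (B := fun i j => R i j + A i j) Qn hQn0 hQnrec i ht]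
  refine minimalRowSum_add_eq_one hR hA hγA (fun i t ht => ?_) i ht
  rw [← tsum_tsum_eq_minimalRowSum Rn hRn0 hRnrec i ht, hRreg i t ht]
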